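/- arXiv:1607.07906 — 3 statements merged into one kernel-verified Lean document; each statement's English description precedes it below -/
import Mathlib

section
/- Let m, d be positive integers, let 0 < ε, and let x, s*, s_i be binary strings of length m with ones(x) = ones(s*). Suppose hamm(x, s_i) ≥ (1+ε)·d and hamm(s*, s_i) ≤ d. Define P0* = {a ∈ [m] : x[a] = 0 and s_i[a] = s*[a] = 1} and P1* = {a ∈ [m] : x[a] = 1 and s_i[a] = s*[a] = 0}. Then min(|P0*|, |P1*|) ≥ ε·d/2. -/
/-- Hamming distance between two binary strings (functions to `Bool`). -/
def hamm {m : ℕ} (x y : Fin m → Bool) : ℕ :=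
  (Finset.univ.filter (fun a => x a ≠ y a)).card

/-- Number of ones in a binary string. -/
def ones {m : ℕ} (s : Fin m → Bool) : ℕ :=
  (Finset.univ.filter (fun a => s a = true)).card

lemma key1 {m : ℕ} (x sstar si : Fin m → Bool) :
    hamm x si + ones sstar ≤
      2 * (Finset.univ.filter
            (fun a => x a = false ∧ si a = true ∧ sstar a = true)).card
        + hamm sstar si + ones x := by
  simp only [hamm, ones, Finset.card_filter, Finset.mul_sum,
    ← Finset.sum_add_distrib]
  apply Finset.sum_le_sum
  intro a _
  cases hx : x a <;> cases hs : sstar a <;> cases hi : si a <;> simp [hx, hs, hi]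

lemma key2 {m : ℕ} (x sstar si : Fin m → Bool) :
    hamm x si + ones x ≤
      2 * (Finset.univ.filter
            (fun a => x a = true ∧ si a = false ∧ sstar a = false)).card
        + hamm sstar si + ones sstar := by
  simp only [hamm, ones, Finset.card_filter, Finset.mul_sum,
    ← Finset.sum_add_distrib]
  apply Finset.sum_le_sum
  intro a _
  cases hx : x a <;> cases hs : sstar a <;> cases hi : si a <;> simp [hx, hs, hi]

theorem stmt_0 {m d : ℕ} (hm : 0 < m) (hd : 0 < d) {ε : ℝ} (hε : 0 < ε)
    (x sstar si : Fin m → Bool)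
    (hones : ones x = ones sstar)
    (hfar : ((1 : ℝ) + ε) * d ≤ (hamm x si : ℝ))
    (hclose : hamm sstar si ≤ d) :
    ε * d / 2 ≤
      min
        (((Finset.univ.filter
            (fun a => x a = false ∧ si a = true ∧ sstar a = true)).card : ℝ))
        (((Finset.univ.filter
            (fun a => x a = true ∧ si a = false ∧ sstar a = false)).card : ℝ)) := by
  have h1 := key1 x sstar si
  have h2 := key2 x sstar si
  rw [hones] at h1 h2
  have hcR : (hamm sstar si : ℝ) ≤ d := by exact_mod_cast hclose
  have h1R : (hamm x si : ℝ) ≤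
      2 * ((Finset.univ.filter
        (fun a => x a = false ∧ si a = true ∧ sstar a = true)).card : ℝ)
      + (hamm sstar si : ℝ) := by
    exact_mod_cast Nat.le_of_add_le_add_right h1
  have h2R : (hamm x si : ℝ) ≤
      2 * ((Finset.univ.filter
        (fun a => x a = true ∧ si a = false ∧ sstar a = false)).card : ℝ)
      + (hamm sstar si : ℝ) := by
    exact_mod_cast Nat.le_of_add_le_add_right h2
  rw [le_min_iff]
  constructor <;> nlinarith
end

section
/- Let x, s_i, s* be binary strings of length m with ones(x) = ones(s*). Define P = {a ∈ [m] : x[a] ≠ s_i[a]}, Q = [m] \ P, P0* = {a ∈ [m] : x[a] = 0 and s_i[a] = s*[a] = 1}, and P1* = {a ∈ [m] : x[a] = 1 and s_i[a] = s*[a] = 0}. Then the number of positions a ∈ Q with s_i[a] ≠ s*[a] is at least | |P1*| − |P0*| | (absolute value of the difference of the cardinalities). -/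
theorem stmt_2 {m : ℕ} (x si sstar : Fin m → Bool)
    (hones : ones x = ones sstar)
    (P : Finset (Fin m)) (hP : P = Finset.univ.filter (fun a => x a ≠ si a))
    (Q : Finset (Fin m)) (hQ : Q = Finset.univ \ P)
    (P0 : Finset (Fin m))
    (hP0 : P0 = Finset.univ.filter
      (fun a => x a = false ∧ si a = true ∧ sstar a = true))
    (P1 : Finset (Fin m))
    (hP1 : P1 = Finset.univ.filter
      (fun a => x a = true ∧ si a = false ∧ sstar a = false)) :
    |(P1.card : ℤ) - (P0.card : ℤ)|
      ≤ ((Q.filter (fun a => si a ≠ sstar a)).card : ℤ) := by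
  classical
  subst hP hQ hP0 hP1
  set Q01 := Finset.univ.filter (fun a => x a = false ∧ si a = false ∧ sstar a = true) with hQ01
  set Q10 := Finset.univ.filter (fun a => x a = true ∧ si a = true ∧ sstar a = false) with hQ10
  set C := Finset.univ.filter (fun a : Fin m => x a = true ∧ sstar a = true) with hC
  have h1 : (Finset.univ.filter
      (fun a => x a = true ∧ si a = false ∧ sstar a = false)).card + Q10.card + C.card
      = ones x := by
    simp only [ones, hQ10, hC, Finset.card_filter]
    rw [← Finset.sum_add_distrib, ← Finset.sum_add_distrib]
    apply Finset.sum_congr rfl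
    intro a _
    cases hx : x a <;> cases hs : si a <;> cases ht : sstar a <;> simp [hx, hs, ht]
  have h2 : (Finset.univ.filter
      (fun a => x a = false ∧ si a = true ∧ sstar a = true)).card + Q01.card + C.card
      = ones sstar := by
    simp only [ones, hQ01, hC, Finset.card_filter]
    rw [← Finset.sum_add_distrib, ← Finset.sum_add_distrib]
    apply Finset.sum_congr rfl
    intro a _
    cases hx : x a <;> cases hs : si a <;> cases ht : sstar a <;> simp [hx, hs, ht]
  have hset : (Finset.univ \ Finset.univ.filter (fun a => x a ≠ si a)).filter
      (fun a => si a ≠ sstar a)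
      = Finset.univ.filter (fun a => ¬(x a ≠ si a) ∧ si a ≠ sstar a) := by
    ext a
    simp [and_comm]
  have h3 : ((Finset.univ \ Finset.univ.filter (fun a => x a ≠ si a)).filter
      (fun a => si a ≠ sstar a)).card = Q01.card + Q10.card := by
    rw [hset]
    simp only [hQ01, hQ10, Finset.card_filter]
    rw [← Finset.sum_add_distrib]
    apply Finset.sum_congr rfl
    intro a _
    cases hx : x a <;> cases hs : si a <;> cases ht : sstar a <;> simp [hx, hs, ht]
  rw [abs_sub_le_iff]
  constructor <;> [skip; skip] <;> omega
end

section
/- Let n ≥ 3 be an integer, let ε ∈ (0,1), and let T be a real number with T ≥ 122·ln(n)/ε². Let X_1, …, X_m be independent random variables with X_j taking value 1 with probability p_j ∈ [0,1] and 0 otherwise, and set k = Σ_{j=1}^m p_j. Suppose there exists a subset A ⊆ [m] such that Σ_{j ∈ A} (1 − p_j) ≤ T and Σ_{j ∉ A} p_j ≤ T. Then P(|Σ_{j=1}^m X_j − k| > ε·T/2) < 1/4. -/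
open MeasureTheory ProbabilityTheory

theorem stmt_15 {Ω : Type*} [MeasurableSpace Ω] (μ : Measure Ω)
    [IsProbabilityMeasure μ] {n m : ℕ} (hn : 3 ≤ n)
    {ε : ℝ} (hε0 : 0 < ε) (hε1 : ε < 1)
    {T : ℝ} (hT : 122 * Real.log n / ε ^ 2 ≤ T)
    (X : Fin m → Ω → ℝ) (p : Fin m → ℝ)
    (hmeas : ∀ j, Measurable (X j))
    (hval : ∀ j, ∀ ω, X j ω = 0 ∨ X j ω = 1)
    (hp : ∀ j, p j ∈ Set.Icc (0 : ℝ) 1)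
    (hBern : ∀ j, μ {ω | X j ω = 1} = ENNReal.ofReal (p j))
    (hindep : iIndepFun X μ)
    (k : ℝ) (hk : k = ∑ j, p j)
    (A : Finset (Fin m))
    (hA1 : (∑ j ∈ A, (1 - p j)) ≤ T)
    (hA0 : (∑ j ∈ Aᶜ, p j) ≤ T) :
    μ {ω | ε * T / 2 < |(∑ j, X j ω) - k|} < 1 / 4 := by
  -- basic numeric facts
  have hlog3 : (1 : ℝ) ≤ Real.log 3 := by
    rw [Real.le_log_iff_exp_le (by norm_num)]
    exact (Real.exp_one_lt_d9.le.trans (by norm_num))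
  have hlogn : (1 : ℝ) ≤ Real.log n := by
    refine hlog3.trans (Real.log_le_log (by norm_num) ?_)
    exact_mod_cast hn
  have hε2 : (0 : ℝ) < ε ^ 2 := by positivity
  have hT122 : (122 : ℝ) ≤ ε ^ 2 * T := by
    have : 122 * Real.log n ≤ ε ^ 2 * T := by
      have := (div_le_iff₀ hε2).mp hT
      linarith [this]
    nlinarith
  have hTpos : (0 : ℝ) < T := by nlinarith
  have hc : (0 : ℝ) < ε * T / 2 := by positivity
  -- Memℒp
  have hmem : ∀ j, MemLp (X j) 2 μ := by
    intro j
    refine MemLp.of_bound (hmeas j).aestronglyMeasurable 1 (ae_of_all _ fun ω => ?_)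
    rcases hval j ω with h | h <;> simp [h]
  -- expectation of each X j is p j
  have hE : ∀ j, μ[X j] = p j := by
    intro j
    have hmeasSet : MeasurableSet {ω | X j ω = 1} := (hmeas j) (measurableSet_singleton 1)
    have hXeq : X j = Set.indicator {ω | X j ω = 1} 1 := by
      funext ω
      rcases hval j ω with h | h
      · rw [Set.indicator_of_notMem (by simp [h]), h]
      · rw [Set.indicator_of_mem (by simpa using h)]
        simpa using h
    rw [hXeq, integral_indicator_one hmeasSet, measureReal_def, hBern j,
      ENNReal.toReal_ofReal (hp j).1]
  -- variance of each X j
  have hVar : ∀ j, variance (X j) μ = p j * (1 - p j) := by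
    intro j
    have hsq : (X j) ^ 2 = X j := by
      funext ω
      rcases hval j ω with h | h <;> simp [h]
    rw [variance_eq_sub (hmem j), hsq, hE j]
    ring
  -- variance of the sum
  have hSumMem : MemLp (∑ j, X j) 2 μ := memLp_finset_sum' _ fun j _ => hmem j
  have hVarSum : variance (∑ j, X j) μ = ∑ j, p j * (1 - p j) := by
    rw [IndepFun.variance_sum (fun j _ => hmem j)
      (fun i _ j _ hij => hindep.indepFun hij)]
    exact Finset.sum_congr rfl fun j _ => hVar j
  -- expectation of the sum
  have hESum : μ[∑ j, X j] = k := by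
    simp_rw [Finset.sum_apply]
    rw [integral_finset_sum _ (fun j _ => (hmem j).integrable one_le_two), hk]
    exact Finset.sum_congr rfl fun j _ => hE j
  -- bound the variance by 2T
  have hVarBound : variance (∑ j, X j) μ ≤ 2 * T := by
    rw [hVarSum]
    have hsplit : ∑ j, p j * (1 - p j)
        = ∑ j ∈ A, p j * (1 - p j) + ∑ j ∈ Aᶜ, p j * (1 - p j) :=
      (Finset.sum_add_sum_compl A _).symm
    have h1 : ∑ j ∈ A, p j * (1 - p j) ≤ ∑ j ∈ A, (1 - p j) := by
      refine Finset.sum_le_sum fun j _ => ?_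
      have := (hp j).1; have := (hp j).2; nlinarith
    have h2 : ∑ j ∈ Aᶜ, p j * (1 - p j) ≤ ∑ j ∈ Aᶜ, p j := by
      refine Finset.sum_le_sum fun j _ => ?_
      have := (hp j).1; have := (hp j).2; nlinarith
    linarith [hsplit, h1, h2, hA1, hA0]
  -- Chebyshev
  have hcheb := meas_ge_le_variance_div_sq (μ := μ) hSumMem hc
  rw [hESum] at hcheb
  have hsub : {ω | ε * T / 2 < |(∑ j, X j ω) - k|}
      ⊆ {ω | ε * T / 2 ≤ |(∑ j, X j) ω - k|} := by
    intro ω hω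
    simp only [Set.mem_setOf_eq, Finset.sum_apply] at hω ⊢
    exact hω.le
  have hratio : variance (∑ j, X j) μ / (ε * T / 2) ^ 2 ≤ 8 / 122 := by
    have h1 : variance (∑ j, X j) μ / (ε * T / 2) ^ 2 ≤ 2 * T / (ε * T / 2) ^ 2 :=
      div_le_div_of_nonneg_right hVarBound (by positivity)
    have h2 : 2 * T / (ε * T / 2) ^ 2 = 8 / (ε ^ 2 * T) := by
      field_simp
      ring
    have h3 : 8 / (ε ^ 2 * T) ≤ 8 / 122 :=
      div_le_div_of_nonneg_left (by norm_num) (by norm_num) hT122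
    calc variance (∑ j, X j) μ / (ε * T / 2) ^ 2 ≤ 2 * T / (ε * T / 2) ^ 2 := h1
      _ = 8 / (ε ^ 2 * T) := h2
      _ ≤ 8 / 122 := h3
  calc μ {ω | ε * T / 2 < |(∑ j, X j ω) - k|}
      ≤ μ {ω | ε * T / 2 ≤ |(∑ j, X j) ω - k|} := measure_mono hsub
    _ ≤ ENNReal.ofReal (variance (∑ j, X j) μ / (ε * T / 2) ^ 2) := hcheb
    _ ≤ ENNReal.ofReal (8 / 122) := ENNReal.ofReal_le_ofReal hratio
    _ < 1 / 4 := by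
        have h14 : (1 : ENNReal) / 4 = ENNReal.ofReal (1 / 4) := by
          rw [ENNReal.ofReal_div_of_pos (by norm_num)]
          norm_num
        rw [h14]
        exact (ENNReal.ofReal_lt_ofReal_iff (by norm_num)).mpr (by norm_num)
end
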